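/- arXiv:1501.00837 — 3 statements merged into one kernel-verified Lean document; each statement's English description precedes it below -/
import Mathlib

section
/- Let x̂^n(t) = Σ_{m=0}^{n−1} Σ_{k=0}^{2^m−1} e_{m,k}(t). Then max_{t∈[0,1]} x̂^n(t) = M_n, where M_n = (1/3)(2 + √2 + (−1)^{n+1} 2^{-n}(√2 − 1)) − 2^{-n/2}, and the maximum is attained exactly at the two points t_n^- = 2^{-n}(2^n − (−1)^n)/3 and t_n^+ = 1 − t_n^-. -/
/-!
Two facts drive everything: `x̂^n` is symmetric about `1/2`, and it is self-similar,
`x̂^{n+1}(u/2) = u/2 + x̂^n(u)/√2` for `u ∈ [0, 1]`.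

Tilt by a linear term: for `0 < c ≤ 1/√2`, `x̂^n(t) + c t` has the unique maximiser
`1 - t_n^-` on `[0, 1]`. On the right half, writing `t = 1 - u/2`, the tilted problem for
`x̂^{n+1}` becomes the tilted problem for `x̂^n` with slope `(1 - c)/√2`, again in `(0, 1/√2]`;
on the left half every point loses to its mirror image because `c > 0`. The untilted `x̂^{n+1}`
on `[1/2, 1]` is the tilted `x̂^n` with slope `1/√2`, which locates the maximisers `t_{n+1}^±`;
the maximal value then follows from `t_{n+1}^- = (1 - t_n^-)/2` and
`M_{n+1} = t_{n+1}^- + M_n/√2`.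
-/

noncomputable def e00 (t : ℝ) : ℝ := max (min t (1 - t)) 0

noncomputable def e (m : ℕ) (k : ℤ) (t : ℝ) : ℝ :=
  (2 : ℝ) ^ (-(m : ℝ) / 2) * e00 ((2 : ℝ) ^ m * t - k)

noncomputable def xhatN (n : ℕ) (t : ℝ) : ℝ :=
  ∑ m ∈ Finset.range n, ∑ k ∈ Finset.range (2 ^ m), e m k t

noncomputable def M (n : ℕ) : ℝ :=
  (1 / 3) * (2 + Real.sqrt 2 + (-1 : ℝ) ^ (n + 1) * (2 : ℝ) ^ (-(n : ℤ)) * (Real.sqrt 2 - 1))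
    - (2 : ℝ) ^ (-(n : ℝ) / 2)

noncomputable def tminus (n : ℕ) : ℝ :=
  (2 : ℝ) ^ (-(n : ℤ)) * (((2 : ℝ) ^ n - (-1 : ℝ) ^ n) / 3)

open Set Real

lemma e00_of_nonpos {t : ℝ} (ht : t ≤ 0) : e00 t = 0 :=
  max_eq_right (min_le_of_left_le ht)

lemma e00_of_le_half {t : ℝ} (ht0 : 0 ≤ t) (ht : t ≤ 1 / 2) : e00 t = t := by
  rw [e00, min_eq_left (by linarith), max_eq_left ht0]

lemma e00_one_sub (t : ℝ) : e00 (1 - t) = e00 t := by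
  rw [e00, e00, sub_sub_cancel, min_comm]

lemma two_rpow_neg_half (m : ℕ) : (2 : ℝ) ^ (-(m : ℝ) / 2) = (√2)⁻¹ ^ m := by
  rw [sqrt_eq_rpow, inv_pow, ← rpow_natCast, ← rpow_mul zero_le_two, ← rpow_neg zero_le_two]
  ring_nf

lemma e_succ_half (m : ℕ) (k : ℤ) (u : ℝ) : e (m + 1) k (u / 2) = (√2)⁻¹ * e m k u := by
  rw [e, e, two_rpow_neg_half, two_rpow_neg_half, pow_succ, pow_succ]
  ring_nf

lemma e_eq_zero_of_le {m : ℕ} {k : ℤ} {u : ℝ} (hu : u ≤ 1) (hk : 2 ^ m ≤ k) : e m k u = 0 := by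
  have hk' : (2 : ℝ) ^ m ≤ k := by exact_mod_cast hk
  rw [e, e00_of_nonpos, mul_zero]
  nlinarith [pow_pos (two_pos (α := ℝ)) m]

lemma e_one_sub (m : ℕ) (k : ℤ) (t : ℝ) : e m k (1 - t) = e m (2 ^ m - 1 - k) t := by
  rw [e, e, ← e00_one_sub]
  push_cast
  ring_nf

lemma xhatN_one_sub (n : ℕ) (t : ℝ) : xhatN n (1 - t) = xhatN n t := by
  refine Finset.sum_congr rfl fun m _ => ?_
  rw [← Finset.sum_range_reflect]
  refine Finset.sum_congr rfl fun k hk => ?_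
  have hk : k < 2 ^ m := Finset.mem_range.1 hk
  rw [e_one_sub]
  congr 2
  rw [Nat.sub_sub, Nat.cast_sub (by omega : 1 + k ≤ 2 ^ m)]
  push_cast
  ring

lemma sum_e_succ_half (m : ℕ) {u : ℝ} (hu : u ≤ 1) :
    ∑ k ∈ Finset.range (2 ^ (m + 1)), e (m + 1) k (u / 2)
      = (√2)⁻¹ * ∑ k ∈ Finset.range (2 ^ m), e m k u := by
  rw [pow_succ, mul_two, Finset.sum_range_add, Finset.mul_sum]
  have hvanish : ∑ k ∈ Finset.range (2 ^ m), e (m + 1) ((2 ^ m + k : ℕ) : ℤ) (u / 2) = 0 :=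
    Finset.sum_eq_zero fun k _ => by
      rw [e_succ_half, e_eq_zero_of_le hu (by push_cast; omega), mul_zero]
  rw [hvanish, add_zero]
  simp only [e_succ_half]

lemma xhatN_succ_half (n : ℕ) {u : ℝ} (hu0 : 0 ≤ u) (hu : u ≤ 1) :
    xhatN (n + 1) (u / 2) = u / 2 + (√2)⁻¹ * xhatN n u := by
  have he0 : e 0 0 (u / 2) = u / 2 := by
    rw [e, e00_of_le_half (by linarith) (by linarith)]
    simp
  rw [xhatN, Finset.sum_range_succ', xhatN, Finset.mul_sum]
  simp only [sum_e_succ_half _ hu, pow_zero, Finset.sum_range_one, Nat.cast_zero, he0, add_comm]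

lemma tminus_zero : tminus 0 = 0 := by simp [tminus]

lemma tminus_succ (n : ℕ) : tminus (n + 1) = (1 - tminus n) / 2 := by
  simp only [tminus, zpow_neg, zpow_natCast, pow_succ]
  field_simp
  ring

lemma tminus_mem_Icc (n : ℕ) : tminus n ∈ Icc (0 : ℝ) 1 := by
  induction n with
  | zero => simp [tminus_zero]
  | succ n ih =>
    rw [tminus_succ]
    constructor <;> linarith [ih.1, ih.2]

lemma M_zero : M 0 = 0 := by norm_num [M]

lemma M_succ (n : ℕ) : M (n + 1) = tminus (n + 1) + (√2)⁻¹ * M n := by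
  have hs : √2 * √2 = 2 := mul_self_sqrt zero_le_two
  have hs0 : √2 ≠ 0 := by positivity
  simp only [M, tminus, two_rpow_neg_half, zpow_neg, zpow_natCast, pow_succ]
  field_simp
  linear_combination (2 * 2 ^ n + (-1 : ℝ) ^ n) * hs

lemma xhatN_tminus (n : ℕ) : xhatN n (tminus n) = M n := by
  induction n with
  | zero => simp [xhatN, M_zero]
  | succ n ih =>
    obtain ⟨h0, h1⟩ := tminus_mem_Icc n
    rw [tminus_succ, xhatN_succ_half n (by linarith) (by linarith), xhatN_one_sub, ih, M_succ,
      tminus_succ]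

def IsStrictMaxOn {α β : Type*} [Preorder β] (f : α → β) (s : Set α) (a : α) : Prop :=
  ∀ x ∈ s, x ≠ a → f x < f a

lemma IsStrictMaxOn.le {α β : Type*} [Preorder β] {f : α → β} {s : Set α} {a x : α}
    (h : IsStrictMaxOn f s a) (hx : x ∈ s) : f x ≤ f a := by
  rcases eq_or_ne x a with rfl | hxa
  · exact le_rfl
  · exact (h x hx hxa).le

lemma xhatN_succ_one_sub_half_add_mul (n : ℕ) (c : ℝ) {u : ℝ} (hu : u ∈ Icc (0 : ℝ) 1) :
    xhatN (n + 1) (1 - u / 2) + c * (1 - u / 2)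
      = c + (√2)⁻¹ * (xhatN n u + (√2)⁻¹ * (1 - c) * u) := by
  have hs : (√2)⁻¹ ^ 2 = 1 / 2 := by rw [inv_pow, sq_sqrt zero_le_two, one_div]
  rw [xhatN_one_sub, xhatN_succ_half n hu.1 hu.2]
  linear_combination (c - 1) * u * hs

lemma IsStrictMaxOn.xhatN_succ {n : ℕ} {c b : ℝ} (hb : b ∈ Icc (0 : ℝ) 1)
    (h : IsStrictMaxOn (fun u => xhatN n u + (√2)⁻¹ * (1 - c) * u) (Icc 0 1) b) :
    IsStrictMaxOn (fun t => xhatN (n + 1) t + c * t) (Icc (1 / 2) 1) (1 - b / 2) := by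
  rintro t ⟨ht0, ht1⟩ htb
  have hu : 2 - 2 * t ∈ Icc (0 : ℝ) 1 := ⟨by linarith, by linarith⟩
  have hub : 2 - 2 * t ≠ b := fun h => htb (by linarith)
  have key := mul_lt_mul_of_pos_left (h _ hu hub) (by positivity : (0 : ℝ) < (√2)⁻¹)
  have ht : t = 1 - (2 - 2 * t) / 2 := by ring
  dsimp only
  rw [ht, xhatN_succ_one_sub_half_add_mul n c hu, xhatN_succ_one_sub_half_add_mul n c hb]
  linarith

theorem isStrictMaxOn_xhatN_add_mul (n : ℕ) {c : ℝ} (hc : c ∈ Ioc 0 (√2)⁻¹) :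
    IsStrictMaxOn (fun t => xhatN n t + c * t) (Icc 0 1) (1 - tminus n) := by
  induction n generalizing c with
  | zero =>
    rintro t ⟨-, ht1⟩ ht
    rw [tminus_zero, sub_zero] at ht ⊢
    simp only [xhatN, Finset.range_zero, Finset.sum_empty, zero_add]
    exact mul_lt_mul_of_pos_left (lt_of_le_of_ne ht1 (by simpa using ht)) hc.1
  | succ n ih =>
    have hc1 : c < 1 := hc.2.trans_lt (inv_lt_one_of_one_lt₀ one_lt_sqrt_two)
    have hright : IsStrictMaxOn (fun t => xhatN (n + 1) t + c * t) (Icc (1 / 2) 1)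
        (1 - tminus (n + 1)) := by
      rw [tminus_succ]
      exact IsStrictMaxOn.xhatN_succ (Icc.mem_iff_one_sub_mem.1 (tminus_mem_Icc n))
        (ih ⟨mul_pos (by positivity) (by linarith),
          mul_le_of_le_one_right (by positivity) (by linarith [hc.1])⟩)
    rintro t ⟨ht0, ht1⟩ ht
    rcases le_or_gt (1 / 2) t with hhalf | hhalf
    · exact hright t ⟨hhalf, ht1⟩ ht
    · -- reflecting into the right half, the tilt `c * t` only loses `c * (1 - 2 * t) > 0`
      have hle := hright.le (x := 1 - t) ⟨by linarith, by linarith⟩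
      simp only [xhatN_one_sub] at hle ⊢
      nlinarith [hc.1]

lemma xhatN_lt_M {n : ℕ} (hn : 1 ≤ n) {t : ℝ} (ht : t ∈ Icc (0 : ℝ) 1) (h₁ : t ≠ tminus n)
    (h₂ : t ≠ 1 - tminus n) : xhatN n t < M n := by
  obtain ⟨m, rfl⟩ := Nat.exists_eq_add_of_le' hn
  have hright : IsStrictMaxOn (xhatN (m + 1)) (Icc (1 / 2) 1) (1 - tminus (m + 1)) := by
    have := IsStrictMaxOn.xhatN_succ (c := 0)
      (Icc.mem_iff_one_sub_mem.1 (tminus_mem_Icc m))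
      (isStrictMaxOn_xhatN_add_mul m ⟨by positivity, by simp⟩)
    simpa only [tminus_succ, zero_mul, add_zero] using this
  rw [← xhatN_tminus, ← xhatN_one_sub _ (tminus _)]
  rcases le_or_gt (1 / 2) t with hhalf | hhalf
  · exact hright t ⟨hhalf, ht.2⟩ h₂
  · rw [← xhatN_one_sub _ t]
    exact hright (1 - t) ⟨by linarith, by linarith [ht.1]⟩ fun h => h₁ (by linarith)

theorem stmt_4 (n : ℕ) (hn : 1 ≤ n) :
    (∀ t ∈ Set.Icc (0 : ℝ) 1, xhatN n t ≤ M n) ∧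
    xhatN n (tminus n) = M n ∧ xhatN n (1 - tminus n) = M n ∧
    (∀ t ∈ Set.Icc (0 : ℝ) 1, xhatN n t = M n → t = tminus n ∨ t = 1 - tminus n) := by
  have hval := xhatN_tminus n
  refine ⟨fun t ht => ?_, hval, by rw [xhatN_one_sub, hval], fun t ht heq => ?_⟩
  · by_cases h₁ : t = tminus n
    · rw [h₁, hval]
    by_cases h₂ : t = 1 - tminus n
    · rw [h₂, xhatN_one_sub, hval]
    exact (xhatN_lt_M hn ht h₁ h₂).le
  · by_contra! h
    exact (xhatN_lt_M hn ht h.1 h.2).ne heq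
end

section
/- Let x* = e_{0,0} + Σ_{m≥1}(Σ_{k=0}^{2^{m−1}−1} e_{m,k} − Σ_{ℓ=2^{m−1}}^{2^m−1} e_{m,ℓ}). Then x* coincides with x̂ on [0,1/2], and −x*(t) = x̂(t − 1/2) − 1/2 for t ∈ [1/2, 1]. In particular, the minimum of x* on [0,1] equals 1/2 − (2 + √2)/3 and is attained at t = 5/6. -/
noncomputable def xhat (t : ℝ) : ℝ :=
  ∑' m : ℕ, ∑ k ∈ Finset.range (2 ^ m), e m k t

noncomputable def θstar (m k : ℕ) : ℝ :=
  if m = 0 then 1 else if k < 2 ^ (m - 1) then 1 else -1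

noncomputable def xstar (t : ℝ) : ℝ :=
  ∑' m : ℕ, ∑ k ∈ Finset.range (2 ^ m), θstar m k * e m k t

/-! On `[0, 1]` the level-`m` block `∑ₖ e m k t` equals `2^(-m/2) · d(2^m t)`, where
`d = periodicTent = e00 ∘ Int.fract` is the distance to the nearest integer. On `[0, 1/2]` the
signs `θstar` only touch vanishing terms, so `xstar = xhat` there. On `[1/2, 1]` every block of
level `m ≥ 1` is negated, and `d(2^m t) = d(2^m (t - 1/2))` because `2^m / 2` is an integer;
only `e 0 0` breaks the symmetry, which produces the constant `1/2`.

For the maximum of `xhat`, the partial sums `∑_{m<n} 2^(-m/2) d(2^m y)` are bounded by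
`φ(d y)` for a piecewise-linear `φ` with `x + 2^(-1/2) φ(min (2x) (1-2x)) ≤ φ(x)` for `x ≥ 0`,
since `d(2y) = min (2 d(y)) (1 - 2 d(y))`. Then `φ ≤ φ(1/3) = (2 + √2)/3`, and since `1/3` is a
fixed point of the tent map the bound is attained at `1/3`. -/

namespace FaberSchauder

open Real Finset

lemma e00_nonneg (x : ℝ) : 0 ≤ e00 x := le_max_right _ _

lemma e00_le_half (x : ℝ) : e00 x ≤ 1 / 2 := by
  have := min_le_left x (1 - x)
  have := min_le_right x (1 - x)
  exact max_le (by linarith) (by norm_num)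

lemma e00_eq_zero_of_nonpos {x : ℝ} (h : x ≤ 0) : e00 x = 0 :=
  max_eq_right ((min_le_left _ _).trans h)

lemma e00_eq_zero_of_one_le {x : ℝ} (h : 1 ≤ x) : e00 x = 0 :=
  max_eq_right ((min_le_right _ _).trans (by linarith))

lemma e00_of_mem_Icc {x : ℝ} (h0 : 0 ≤ x) (h1 : x ≤ 1) : e00 x = min x (1 - x) :=
  max_eq_left (le_min h0 (by linarith))

lemma two_rpow_neg_natCast_div_two (m : ℕ) : (2 : ℝ) ^ (-(m : ℝ) / 2) = (√2)⁻¹ ^ m := by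
  rw [show -(m : ℝ) / 2 = -(1 / 2) * m by ring, rpow_mul zero_le_two, rpow_natCast,
    rpow_neg zero_le_two, ← sqrt_eq_rpow]

lemma inv_sqrt_two_nonneg : 0 ≤ (√2)⁻¹ := inv_nonneg.2 (sqrt_nonneg 2)

lemma inv_sqrt_two_lt_one : (√2)⁻¹ < 1 := inv_lt_one_of_one_lt₀ one_lt_sqrt_two

lemma e_eq (m : ℕ) (k : ℤ) (t : ℝ) : e m k t = (√2)⁻¹ ^ m * e00 (2 ^ m * t - k) := by
  rw [e, two_rpow_neg_natCast_div_two]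

lemma e_nonneg (m : ℕ) (k : ℤ) (t : ℝ) : 0 ≤ e m k t := by
  rw [e_eq]; exact mul_nonneg (pow_nonneg inv_sqrt_two_nonneg m) (e00_nonneg _)

lemma e_eq_zero_of_le {m : ℕ} {k : ℤ} {t : ℝ} (h : 2 ^ m * t ≤ k) : e m k t = 0 := by
  rw [e_eq, e00_eq_zero_of_nonpos (by linarith), mul_zero]

lemma e_eq_zero_of_add_one_le {m : ℕ} {k : ℤ} {t : ℝ} (h : (k : ℝ) + 1 ≤ 2 ^ m * t) :
    e m k t = 0 := by
  rw [e_eq, e00_eq_zero_of_one_le (by linarith), mul_zero]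

noncomputable def periodicTent (y : ℝ) : ℝ := e00 (Int.fract y)

lemma periodicTent_nonneg (y : ℝ) : 0 ≤ periodicTent y := e00_nonneg _

lemma periodicTent_le_half (y : ℝ) : periodicTent y ≤ 1 / 2 := e00_le_half _

lemma periodicTent_add_intCast (y : ℝ) (n : ℤ) : periodicTent (y + n) = periodicTent y := by
  rw [periodicTent, Int.fract_add_intCast, periodicTent]

lemma periodicTent_of_mem_Ico {u : ℝ} (h0 : 0 ≤ u) (h1 : u < 1) : periodicTent u = e00 u := by
  rw [periodicTent, Int.fract_eq_self.2 ⟨h0, h1⟩]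

lemma periodicTent_two_mul (y : ℝ) :
    periodicTent (2 * y) = min (2 * periodicTent y) (1 - 2 * periodicTent y) := by
  set u := Int.fract y
  have hu0 : 0 ≤ u := Int.fract_nonneg y
  have hu1 : u < 1 := Int.fract_lt_one y
  have hy : periodicTent y = min u (1 - u) := e00_of_mem_Icc hu0 hu1.le
  rw [show 2 * y = 2 * u + ((2 * ⌊y⌋ : ℤ) : ℝ) by push_cast [u, Int.fract]; ring,
    periodicTent_add_intCast, hy]
  rcases lt_or_ge u (1 / 2) with h | h
  · rw [min_eq_left (by linarith : u ≤ 1 - u), periodicTent_of_mem_Ico (by positivity) (by linarith),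
      e00_of_mem_Icc (by positivity) (by linarith)]
  · rw [min_eq_right (by linarith : 1 - u ≤ u),
      show 2 * u = (2 * u - 1) + ((1 : ℤ) : ℝ) by push_cast; ring, periodicTent_add_intCast,
      periodicTent_of_mem_Ico (by linarith) (by linarith),
      e00_of_mem_Icc (by linarith) (by linarith), min_comm]
    congr 1 <;> ring

lemma sum_range_e00_sub_natCast {N : ℕ} {y : ℝ} (h0 : 0 ≤ y) (hN : y ≤ N) :
    ∑ k ∈ range N, e00 (y - k) = periodicTent y := by
  set j := ⌊y⌋₊
  have hjy : (j : ℝ) ≤ y := Nat.floor_le h0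
  have hyj : y < j + 1 := Nat.lt_floor_add_one y
  rw [sum_eq_single j]
  · rw [← periodicTent_of_mem_Ico (by linarith) (by linarith), ← periodicTent_add_intCast (y - j) j,
      Int.cast_natCast, sub_add_cancel]
  · intro k _ hk
    rcases lt_or_gt_of_ne hk with hlt | hgt
    · have : (k : ℝ) + 1 ≤ j := by exact_mod_cast hlt
      exact e00_eq_zero_of_one_le (by linarith)
    · have : (j : ℝ) + 1 ≤ k := by exact_mod_cast hgt
      exact e00_eq_zero_of_nonpos (by linarith)
  · intro hj
    have : (N : ℝ) ≤ j := by exact_mod_cast not_lt.1 (mem_range.not.1 hj)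
    exact e00_eq_zero_of_nonpos (by linarith)

lemma sum_range_e {t : ℝ} (h0 : 0 ≤ t) (h1 : t ≤ 1) (m : ℕ) :
    ∑ k ∈ range (2 ^ m), e m k t = (√2)⁻¹ ^ m * periodicTent (2 ^ m * t) := by
  have hN : 2 ^ m * t ≤ ((2 ^ m : ℕ) : ℝ) := by push_cast; nlinarith [pow_pos two_pos (M₀ := ℝ) m]
  rw [← sum_range_e00_sub_natCast (by positivity) hN, mul_sum]
  simp only [e_eq, Int.cast_natCast]

lemma summable_geometric_mul_periodicTent (y : ℝ) :
    Summable fun m : ℕ => (√2)⁻¹ ^ m * periodicTent (2 ^ m * y) := by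
  refine .of_nonneg_of_le (fun m => mul_nonneg (pow_nonneg inv_sqrt_two_nonneg m)
    (periodicTent_nonneg _)) (fun m => ?_)
    (summable_geometric_of_lt_one inv_sqrt_two_nonneg inv_sqrt_two_lt_one)
  have := periodicTent_le_half (2 ^ m * y)
  exact mul_le_of_le_one_right (pow_nonneg inv_sqrt_two_nonneg m) (by linarith)

lemma xhat_eq_tsum {t : ℝ} (h0 : 0 ≤ t) (h1 : t ≤ 1) :
    xhat t = ∑' m : ℕ, (√2)⁻¹ ^ m * periodicTent (2 ^ m * t) :=
  tsum_congr (sum_range_e h0 h1)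

lemma summable_sum_range_e {t : ℝ} (h0 : 0 ≤ t) (h1 : t ≤ 1) :
    Summable fun m : ℕ => ∑ k ∈ range (2 ^ m), e m k t :=
  (summable_geometric_mul_periodicTent t).congr fun m => (sum_range_e h0 h1 m).symm

lemma xhat_nonneg (t : ℝ) : 0 ≤ xhat t :=
  tsum_nonneg fun m => sum_nonneg fun k _ => e_nonneg m k t

/-- On `[0, 1/3]` this is `x + (√2)⁻¹ · (2 + √2) / 3`: the first term plus the scaled maximum
of the remaining ones. -/
noncomputable def majorant (x : ℝ) : ℝ :=
  (2 + √2) / 3 - if x ≤ 1 / 3 then 1 / 3 - x else (√2 - 1) * (x - 1 / 3)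

lemma majorant_nonneg {x : ℝ} (h0 : 0 ≤ x) (h1 : x ≤ 1 / 2) : 0 ≤ majorant x := by
  have := mul_self_sqrt (zero_le_two (α := ℝ))
  have := one_lt_sqrt_two
  have := sqrt_two_lt_three_halves
  rw [majorant]; split_ifs <;> nlinarith

lemma majorant_le (x : ℝ) : majorant x ≤ (2 + √2) / 3 := by
  have := one_lt_sqrt_two
  rw [majorant]; split_ifs <;> nlinarith

lemma add_inv_sqrt_two_mul_majorant_le {x : ℝ} (h0 : 0 ≤ x) :
    x + (√2)⁻¹ * majorant (min (2 * x) (1 - 2 * x)) ≤ majorant x := by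
  have := mul_self_sqrt (zero_le_two (α := ℝ))
  have := one_lt_sqrt_two
  have := sqrt_two_lt_three_halves
  rw [show (√2)⁻¹ = √2 / 2 by field_simp; linarith]
  rcases le_total x (1 / 4) with h | h
  · rw [min_eq_left (by linarith), majorant, majorant]
    split_ifs <;> nlinarith
  · rw [min_eq_right (by linarith), majorant, majorant]
    split_ifs <;> nlinarith

lemma sum_range_le_majorant (n : ℕ) (y : ℝ) :
    ∑ m ∈ range n, (√2)⁻¹ ^ m * periodicTent (2 ^ m * y) ≤ majorant (periodicTent y) := by
  induction n generalizing y with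
  | zero => exact majorant_nonneg (periodicTent_nonneg y) (periodicTent_le_half y)
  | succ n ih =>
    have hshift : ∑ m ∈ range n, (√2)⁻¹ ^ (m + 1) * periodicTent (2 ^ (m + 1) * y)
        = (√2)⁻¹ * ∑ m ∈ range n, (√2)⁻¹ ^ m * periodicTent (2 ^ m * (2 * y)) := by
      rw [mul_sum]
      refine sum_congr rfl fun m _ => ?_
      rw [pow_succ, pow_succ, mul_assoc _ 2 y]
      ring
    have hstep := add_inv_sqrt_two_mul_majorant_le (periodicTent_nonneg y)
    rw [← periodicTent_two_mul] at hstep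
    have hih := mul_le_mul_of_nonneg_left (ih (2 * y)) inv_sqrt_two_nonneg
    rw [sum_range_succ', hshift, pow_zero, pow_zero, one_mul, one_mul]
    linarith

lemma xhat_le {t : ℝ} (h0 : 0 ≤ t) (h1 : t ≤ 1) : xhat t ≤ (2 + √2) / 3 := by
  rw [xhat_eq_tsum h0 h1]
  exact ((summable_geometric_mul_periodicTent t).tsum_le_of_sum_range_le
    fun n => sum_range_le_majorant n t).trans (majorant_le _)

lemma periodicTent_two_pow_mul_one_third (m : ℕ) : periodicTent (2 ^ m * (1 / 3)) = 1 / 3 := by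
  induction m with
  | zero =>
    rw [pow_zero, one_mul, periodicTent_of_mem_Ico (by norm_num) (by norm_num),
      e00_of_mem_Icc (by norm_num) (by norm_num)]
    norm_num
  | succ n ih =>
    rw [pow_succ, mul_comm _ (2 : ℝ), mul_assoc, periodicTent_two_mul, ih]
    norm_num

lemma xhat_one_third : xhat (1 / 3) = (2 + √2) / 3 := by
  have := mul_self_sqrt (zero_le_two (α := ℝ))
  have hsum : (1 - (√2)⁻¹) * (2 + √2) = 1 := by field_simp; nlinarith
  rw [xhat_eq_tsum (by norm_num) (by norm_num), tsum_congr fun m => by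
    rw [periodicTent_two_pow_mul_one_third], tsum_mul_right,
    tsum_geometric_of_lt_one inv_sqrt_two_nonneg inv_sqrt_two_lt_one,
    inv_eq_of_mul_eq_one_right hsum]
  ring

lemma θstar_mul_e_of_le_half {t : ℝ} (ht : t ≤ 1 / 2) (m k : ℕ) :
    θstar m k * e m k t = e m k t := by
  rcases m with _ | n
  · rw [θstar, if_pos rfl, one_mul]
  rw [θstar, if_neg n.succ_ne_zero, Nat.add_sub_cancel]
  split_ifs with hk
  · exact one_mul _
  · have hk' : ((2 ^ n : ℕ) : ℝ) ≤ k := by exact_mod_cast not_lt.1 hk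
    have := mul_le_mul_of_nonneg_left ht (pow_nonneg zero_le_two (M₀ := ℝ) n)
    rw [e_eq_zero_of_le (by push_cast at hk' ⊢; rw [pow_succ]; linarith), mul_zero]

lemma θstar_mul_e_of_half_le {m : ℕ} (hm : m ≠ 0) {t : ℝ} (ht : 1 / 2 ≤ t) (k : ℕ) :
    θstar m k * e m k t = -e m k t := by
  obtain ⟨n, rfl⟩ := Nat.exists_eq_add_one_of_ne_zero hm
  rw [θstar, if_neg n.succ_ne_zero, Nat.add_sub_cancel]
  split_ifs with hk
  · have hk' : (k : ℝ) + 1 ≤ ((2 ^ n : ℕ) : ℝ) := by exact_mod_cast Nat.succ_le_of_lt hk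
    have := mul_le_mul_of_nonneg_left ht (pow_nonneg zero_le_two (M₀ := ℝ) n)
    rw [e_eq_zero_of_add_one_le (by push_cast at hk' ⊢; rw [pow_succ]; linarith), mul_zero,
      neg_zero]
  · exact neg_one_mul _

lemma xstar_eq_xhat_of_le_half {t : ℝ} (ht : t ≤ 1 / 2) : xstar t = xhat t :=
  tsum_congr fun m => sum_congr rfl fun k _ => θstar_mul_e_of_le_half ht m k

lemma sum_range_e_add_half {m : ℕ} (hm : m ≠ 0) {s : ℝ} (h0 : 0 ≤ s) (h1 : s ≤ 1 / 2) :
    ∑ k ∈ range (2 ^ m), e m k (s + 1 / 2) = ∑ k ∈ range (2 ^ m), e m k s := by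
  obtain ⟨n, rfl⟩ := Nat.exists_eq_add_one_of_ne_zero hm
  rw [sum_range_e (by linarith) (by linarith), sum_range_e h0 (by linarith),
    show (2 : ℝ) ^ (n + 1) * (s + 1 / 2) = 2 ^ (n + 1) * s + ((2 ^ n : ℤ) : ℝ) by push_cast; ring,
    periodicTent_add_intCast]

lemma xstar_add_half {s : ℝ} (h0 : 0 ≤ s) (h1 : s ≤ 1 / 2) :
    xstar (s + 1 / 2) = 1 / 2 - xhat s := by
  have hterm : ∀ m : ℕ, ∑ k ∈ range (2 ^ m), θstar m k * e m k (s + 1 / 2)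
      = (if m = 0 then 1 / 2 else 0) - ∑ k ∈ range (2 ^ m), e m k s := by
    rintro (_ | m)
    · simp only [pow_zero, sum_range_one, θstar, if_true, one_mul, e_eq, Nat.cast_zero,
        Int.cast_zero, sub_zero]
      rw [e00_of_mem_Icc (by linarith) (by linarith), e00_of_mem_Icc h0 (by linarith),
        min_eq_right (by linarith), min_eq_left (by linarith)]
      ring
    · rw [sum_congr rfl fun k _ => θstar_mul_e_of_half_le m.succ_ne_zero (by linarith) k,
        sum_neg_distrib, sum_range_e_add_half m.succ_ne_zero h0 h1, if_neg m.succ_ne_zero,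
        zero_sub]
  rw [xstar, tsum_congr hterm, Summable.tsum_sub (hasSum_ite_eq 0 _).summable
    (summable_sum_range_e h0 (by linarith)), tsum_ite_eq, xhat]

end FaberSchauder

open FaberSchauder in
theorem stmt_9 :
    (∀ t ∈ Set.Icc (0 : ℝ) (1 / 2), xstar t = xhat t) ∧
    (∀ t ∈ Set.Icc (1 / 2 : ℝ) 1, -xstar t = xhat (t - 1 / 2) - 1 / 2) ∧
    (∀ t ∈ Set.Icc (0 : ℝ) 1, 1 / 2 - (2 + Real.sqrt 2) / 3 ≤ xstar t) ∧
    xstar (5 / 6) = 1 / 2 - (2 + Real.sqrt 2) / 3 := by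
  have hright : ∀ t ∈ Set.Icc (1 / 2 : ℝ) 1, xstar t = 1 / 2 - xhat (t - 1 / 2) := fun t ht => by
    simpa using xstar_add_half (s := t - 1 / 2) (by linarith [ht.1]) (by linarith [ht.2])
  refine ⟨fun t ht => xstar_eq_xhat_of_le_half ht.2, fun t ht => by rw [hright t ht]; ring,
    fun t ht => ?_, ?_⟩
  · rcases le_total t (1 / 2) with h | h
    · rw [xstar_eq_xhat_of_le_half h]
      linarith [xhat_nonneg t, Real.sqrt_nonneg 2]
    · rw [hright t ⟨h, ht.2⟩]
      linarith [xhat_le (t := t - 1 / 2) (by linarith) (by linarith [ht.2])]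
  · rw [hright _ ⟨by norm_num, by norm_num⟩, show (5 / 6 : ℝ) - 1 / 2 = 1 / 3 by norm_num,
      xhat_one_third]
end

section
/- The class 𝒳 is a compact subset of C[0,1] with respect to the topology of uniform convergence. -/
/-- The class 𝒳 viewed inside the space `C([0,1], ℝ)` with the uniform topology. -/
def mathcalXC : Set C(Set.Icc (0 : ℝ) 1, ℝ) :=
  {f | ∃ θ : ℕ → ℕ → ℝ, (∀ m k, θ m k = 1 ∨ θ m k = -1) ∧
    ∀ t : Set.Icc (0 : ℝ) 1,
      f t = ∑' m : ℕ, ∑ k ∈ Finset.range (2 ^ m), θ m k * e m k ↑t}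

open Set Finset

lemma e00_nonneg (x : ℝ) : 0 ≤ e00 x := le_max_right _ _

lemma e00_le_half (x : ℝ) : e00 x ≤ 1 / 2 := by
  unfold e00
  rcases le_total x (1 / 2) with h | h
  · exact max_le ((min_le_left _ _).trans h) (by norm_num)
  · exact max_le ((min_le_right _ _).trans (by linarith)) (by norm_num)

lemma e00_eq_zero_of_le_zero (x : ℝ) (h : x ≤ 0) : e00 x = 0 :=
  max_eq_right ((min_le_left _ _).trans h)

lemma e00_eq_zero_of_one_le (x : ℝ) (h : 1 ≤ x) : e00 x = 0 :=
  max_eq_right ((min_le_right _ _).trans (by linarith))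

lemma continuous_e00 : Continuous e00 := by
  unfold e00
  fun_prop

lemma e00_sub_eq_zero_of_ne_floor (x : ℝ) {k : ℤ} (hk : k ≠ ⌊x⌋) : e00 (x - k) = 0 := by
  rcases hk.lt_or_gt with hlt | hgt
  · apply e00_eq_zero_of_one_le
    have : ((k + 1 : ℤ) : ℝ) ≤ x := Int.le_floor.mp (by omega)
    push_cast at this
    linarith
  · apply e00_eq_zero_of_le_zero
    have : x < k := Int.floor_lt.mp hgt
    linarith

lemma sum_e00_sub_le (x : ℝ) (s : Finset ℤ) : ∑ k ∈ s, e00 (x - k) ≤ 1 / 2 :=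
  calc ∑ k ∈ s, e00 (x - k)
      ≤ ∑ k ∈ insert ⌊x⌋ s, e00 (x - k) :=
        sum_le_sum_of_subset_of_nonneg (subset_insert _ _) fun _ _ _ => e00_nonneg _
    _ = e00 (x - ⌊x⌋) :=
        sum_eq_single_of_mem _ (mem_insert_self _ _) fun _ _ hk =>
          e00_sub_eq_zero_of_ne_floor x hk
    _ ≤ 1 / 2 := e00_le_half _

lemma e_nonneg (m : ℕ) (k : ℤ) (t : ℝ) : 0 ≤ e m k t :=
  mul_nonneg (by positivity) (e00_nonneg _)

lemma sum_e_le (m : ℕ) (s : Finset ℕ) (t : ℝ) :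
    ∑ k ∈ s, e m k t ≤ (2 : ℝ) ^ (-(m : ℝ) / 2) / 2 := by
  have hsum : ∑ k ∈ s, e00 ((2 : ℝ) ^ m * t - (k : ℤ)) ≤ 1 / 2 := by
    simpa [sum_map] using sum_e00_sub_le ((2 : ℝ) ^ m * t) (s.map Nat.castEmbedding)
  rw [div_eq_mul_one_div]
  simp only [e, ← mul_sum]
  exact mul_le_mul_of_nonneg_left hsum (by positivity)

lemma summable_two_rpow_neg_half_mul : Summable fun m : ℕ => (2 : ℝ) ^ (-(m : ℝ) / 2) := by
  have h : ∀ m : ℕ, (2 : ℝ) ^ (-(m : ℝ) / 2) = ((2 : ℝ) ^ (-(1 / 2) : ℝ)) ^ m := fun m => by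
    rw [← Real.rpow_mul_natCast zero_le_two]
    ring_nf
  simp_rw [h]
  exact summable_geometric_of_lt_one (by positivity)
    (Real.rpow_lt_one_of_one_lt_of_neg one_lt_two (by norm_num))

noncomputable def faberSchauder (m : ℕ) (k : ℤ) : C(Icc (0 : ℝ) 1, ℝ) where
  toFun t := e m k t
  continuous_toFun := by
    unfold e
    have := continuous_e00
    fun_prop

@[simp]
lemma faberSchauder_apply (m : ℕ) (k : ℤ) (t : Icc (0 : ℝ) 1) : faberSchauder m k t = e m k t :=
  rfl

lemma norm_sum_smul_faberSchauder_le (m : ℕ) (s : Finset ℕ) {c : ℕ → ℝ}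
    (hc : ∀ k, |c k| ≤ 1) :
    ‖∑ k ∈ s, c k • faberSchauder m k‖ ≤ (2 : ℝ) ^ (-(m : ℝ) / 2) / 2 := by
  refine (ContinuousMap.norm_le _ (by positivity)).mpr fun t => ?_
  simp only [ContinuousMap.coe_sum, ContinuousMap.coe_smul, Finset.sum_apply, Pi.smul_apply,
    smul_eq_mul, Real.norm_eq_abs]
  calc |∑ k ∈ s, c k * faberSchauder m k t|
      ≤ ∑ k ∈ s, |c k * faberSchauder m k t| := abs_sum_le_sum_abs _ _
    _ ≤ ∑ k ∈ s, e m k t := sum_le_sum fun k _ => by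
        rw [faberSchauder_apply, abs_mul, abs_of_nonneg (e_nonneg m k t)]
        exact mul_le_of_le_one_left (e_nonneg m k t) (hc k)
    _ ≤ (2 : ℝ) ^ (-(m : ℝ) / 2) / 2 := sum_e_le m s t

noncomputable def levelSum (θ : ℕ → ℕ → ℝ) (m : ℕ) : C(Icc (0 : ℝ) 1, ℝ) :=
  ∑ k ∈ range (2 ^ m), θ m k • faberSchauder m k

noncomputable def schauderSeries (θ : ℕ → ℕ → ℝ) : C(Icc (0 : ℝ) 1, ℝ) :=
  ∑' m, levelSum θ m

def signPatterns : Set (ℕ → ℕ → ℝ) := {θ | ∀ m k, θ m k = 1 ∨ θ m k = -1}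

lemma abs_le_one_of_mem_signPatterns {θ : ℕ → ℕ → ℝ} (hθ : θ ∈ signPatterns) (m k : ℕ) :
    |θ m k| ≤ 1 := by
  rcases hθ m k with h | h <;> simp [h]

lemma isCompact_signPatterns : IsCompact signPatterns := by
  have : signPatterns = univ.pi fun _ => univ.pi fun _ => ({1, -1} : Set ℝ) := by
    ext θ
    simp [signPatterns]
  rw [this]
  exact isCompact_univ_pi fun _ => isCompact_univ_pi fun _ => (toFinite _).isCompact

lemma norm_levelSum_le {θ : ℕ → ℕ → ℝ} (hθ : θ ∈ signPatterns) (m : ℕ) :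
    ‖levelSum θ m‖ ≤ (2 : ℝ) ^ (-(m : ℝ) / 2) / 2 :=
  norm_sum_smul_faberSchauder_le m _ (abs_le_one_of_mem_signPatterns hθ m)

lemma schauderSeries_apply {θ : ℕ → ℕ → ℝ} (hθ : θ ∈ signPatterns) (t : Icc (0 : ℝ) 1) :
    schauderSeries θ t = ∑' m, ∑ k ∈ range (2 ^ m), θ m k * e m k t := by
  have hsum : Summable (levelSum θ) :=
    (summable_two_rpow_neg_half_mul.div_const 2).of_norm_bounded (norm_levelSum_le hθ)
  rw [schauderSeries, ← ContinuousMap.tsum_apply hsum]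
  simp [levelSum]

lemma continuousOn_schauderSeries : ContinuousOn schauderSeries signPatterns :=
  continuousOn_tsum (fun m => by unfold levelSum; fun_prop)
    (summable_two_rpow_neg_half_mul.div_const 2) fun m _ hθ => norm_levelSum_le hθ m

lemma image_schauderSeries_signPatterns : schauderSeries '' signPatterns = mathcalXC := by
  ext f
  constructor
  · rintro ⟨θ, hθ, rfl⟩
    exact ⟨θ, hθ, schauderSeries_apply hθ⟩
  · rintro ⟨θ, hθ, hf⟩
    exact ⟨θ, hθ, ContinuousMap.ext fun t => (schauderSeries_apply hθ t).trans (hf t).symm⟩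

theorem stmt_14 : IsCompact mathcalXC :=
  image_schauderSeries_signPatterns ▸
    isCompact_signPatterns.image_of_continuousOn continuousOn_schauderSeries
end
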